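/- For every τ ∈ ∏_p ℤ_p, the ring R_τ is quasi-Euclidean: there is a function φ : R_τ² → (2 × ℕ⁴, lex) such that for all a, b ∈ R_τ with b ≠ 0 there exists q ∈ R_τ with φ(b, a - bq) < φ(a,b). In particular, R_τ is a Bézout domain. -/

import Mathlib

/-!
Run a Euclidean algorithm inside `R_τ`. When `deg a > deg b`, the leading term of `a` is
cancelled by `b * c (X - t) ^ k` with `k = deg a - deg b`: choosing the integer `t` by the Chinese
remainder theorem so that `t ≡ τ_p mod p ^ v_p(den c)` for every `p` puts `c (X - t) ^ k` in
`R_τ`. When `deg a = deg b`, subtracting an integer multiple of `b` runs Euclid's algorithm on the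
integers `n lc(a)`, `n lc(b)` for a common denominator `n`, so the degree eventually drops. Hence
every pair reaches remainder `0` after finitely many division steps; the least number of steps is
a quasi-Euclidean norm (placed in the last coordinate of `2 × ℕ⁴`), and finite division chains
make every two-generated ideal principal.
-/

open Polynomial

/-- The subset `R_τ` of `ℚ[X]`: quotients `h/n` with `h ∈ ℤ[X]`, `n` a positive integer,
such that for every prime `p` the evaluation `h(τ_p)` in the `p`-adic integers is divisible
by `p ^ v_p(n)`. -/
def RtauSet (τ : ∀ p : {p : ℕ // p.Prime}, @PadicInt p.1 ⟨p.2⟩) : Set (Polynomial ℚ) :=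
  {f | ∃ (h : Polynomial ℤ) (n : ℕ), n ≠ 0 ∧
    Polynomial.C (n : ℚ) * f = h.map (algebraMap ℤ ℚ) ∧
    ∀ p : {p : ℕ // p.Prime},
      letI : Fact p.1.Prime := ⟨p.2⟩
      ((p.1 : @PadicInt p.1 ⟨p.2⟩) ^ (n.factorization p.1)) ∣ Polynomial.aeval (τ p) h}

section Padic

local instance (p : {p : ℕ // p.Prime}) : Fact p.1.Prime := ⟨p.2⟩

theorem PadicInt.exists_int_sub_dvd (x : ∀ p : {p : ℕ // p.Prime}, ℤ_[p.1]) (n : ℕ) :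
    ∃ t : ℤ, ∀ p : {p : ℕ // p.Prime}, (p.1 : ℤ_[p.1]) ^ n.factorization p.1 ∣ x p - t := by
  classical
  let a (p : ℕ) : ℕ :=
    if hp : p.Prime then haveI := Fact.mk hp; (x ⟨p, hp⟩).appr (n.factorization p) else 0
  obtain ⟨k, hk⟩ := Nat.chineseRemainderOfFinset a (fun p => p ^ n.factorization p)
    n.primeFactors (fun p hp => pow_ne_zero _ (Nat.prime_of_mem_primeFactors hp).ne_zero)
    (fun p hp q hq hpq => Nat.Coprime.pow _ _ <|
      (Nat.coprime_primes (Nat.prime_of_mem_primeFactors hp)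
        (Nat.prime_of_mem_primeFactors hq)).2 hpq)
  refine ⟨k, fun p => ?_⟩
  by_cases hpn : p.1 ∈ n.primeFactors
  · have happr := Ideal.mem_span_singleton.1 (PadicInt.appr_spec (n.factorization p.1) (x p))
    have hcrt := map_dvd (Int.castRingHom ℤ_[p.1]) (hk p.1 hpn).dvd
    simp only [a, dif_pos p.2, eq_intCast] at hcrt
    push_cast at hcrt
    simpa using dvd_add happr hcrt
  · rw [← Nat.support_factorization, Finsupp.notMem_support_iff] at hpn
    simp [hpn]

theorem exists_mem_rtauSet_natDegree_leadingCoeff (τ : ∀ p : {p : ℕ // p.Prime}, ℤ_[p.1])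
    {c : ℚ} (hc : c ≠ 0) {k : ℕ} (hk : k ≠ 0) :
    ∃ q ∈ RtauSet τ, q.natDegree = k ∧ q.leadingCoeff = c := by
  obtain ⟨t, ht⟩ := PadicInt.exists_int_sub_dvd τ c.den
  have hmon : ((X - C (t : ℚ)) ^ k).Monic := (monic_X_sub_C _).pow k
  refine ⟨C c * (X - C (t : ℚ)) ^ k, ?_,
    by rw [natDegree_C_mul hc, natDegree_pow, natDegree_X_sub_C, mul_one],
    by rw [leadingCoeff_mul, leadingCoeff_C, hmon.leadingCoeff, mul_one]⟩
  refine ⟨(c.num : ℤ[X]) * (X - (t : ℤ[X])) ^ k, c.den, c.den_nz, ?_, fun p => ?_⟩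
  · simp only [Polynomial.map_mul, Polynomial.map_pow, Polynomial.map_sub, Polynomial.map_intCast,
      map_X, ← mul_assoc, ← C_mul, Rat.den_mul_eq_num]
    simp
  · simp only [map_mul, map_pow, map_sub, aeval_X, map_intCast]
    exact dvd_mul_of_dvd_right ((ht p).trans (dvd_pow_self _ hk)) _

end Padic

section EuclidChain

variable {R : Type*} [CommRing R]

/-- `EuclidChain n a b`: for suitable quotients, at most `n` division steps
`(a, b) ↦ (b, a - b * q)` lead from `(a, b)` to a pair with second entry `0`. -/
inductive EuclidChain : ℕ → R → R → Prop
  | zero (n : ℕ) (a : R) : EuclidChain n a 0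
  | step {n : ℕ} {a b : R} (q : R) : EuclidChain n b (a - b * q) → EuclidChain (n + 1) a b

def HasEuclidChain (a b : R) : Prop := ∃ n, EuclidChain n a b

theorem HasEuclidChain.zero (a : R) : HasEuclidChain a 0 := ⟨0, .zero 0 a⟩

theorem HasEuclidChain.step {a b : R} (q : R) (h : HasEuclidChain b (a - b * q)) :
    HasEuclidChain a b :=
  let ⟨n, hn⟩ := h
  ⟨n + 1, .step q hn⟩

theorem HasEuclidChain.symm {a b : R} (h : HasEuclidChain b a) : HasEuclidChain a b :=
  .step 0 (by simpa using h)

theorem HasEuclidChain.of_sub_mul {a b : R} (q : R) (h : HasEuclidChain (a - b * q) b) :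
    HasEuclidChain a b :=
  .step q h.symm

theorem EuclidChain.span_pair_isPrincipal {n : ℕ} {a b : R} (h : EuclidChain n a b) :
    (Ideal.span {a, b}).IsPrincipal := by
  induction h with
  | zero n a => exact ⟨a, by simp [Ideal.span_insert, Set.singleton_zero]⟩
  | @step n a b q _ ih =>
    rwa [Ideal.span_pair_comm, sub_eq_add_neg, ← mul_neg, Ideal.span_pair_add_right_mul] at ih

theorem isBezout_of_forall_hasEuclidChain (h : ∀ a b : R, HasEuclidChain a b) : IsBezout R :=
  IsBezout.iff_span_pair_isPrincipal.2 fun a b =>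
    let ⟨_, hn⟩ := h a b
    hn.span_pair_isPrincipal

theorem exists_nat_norm_of_forall_hasEuclidChain (h : ∀ a b : R, HasEuclidChain a b) :
    ∃ φ : R × R → ℕ, ∀ a b : R, b ≠ 0 → ∃ q : R, φ (b, a - b * q) < φ (a, b) := by
  classical
  refine ⟨fun x => Nat.find (h x.1 x.2), fun a b hb => ?_⟩
  dsimp only
  have hmin := Nat.find_spec (h a b)
  generalize Nat.find (h a b) = n at hmin ⊢
  rcases hmin with _ | ⟨q, hq⟩
  · exact absurd rfl hb
  · exact ⟨q, Nat.lt_succ_of_le (Nat.find_min' _ hq)⟩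

end EuclidChain

theorem Polynomial.natDegree_sub_mul_lt {R : Type*} [Ring R] {a b q : R[X]}
    (ha : 0 < a.natDegree) (hdeg : b.natDegree + q.natDegree = a.natDegree)
    (hlc : b.leadingCoeff * q.leadingCoeff = a.leadingCoeff) :
    (a - b * q).natDegree < a.natDegree := by
  have ha0 : a ≠ 0 := ne_zero_of_natDegree_gt ha
  have hlc0 : b.leadingCoeff * q.leadingCoeff ≠ 0 := hlc ▸ leadingCoeff_ne_zero.2 ha0
  have hbq0 : b * q ≠ 0 := leadingCoeff_ne_zero.1 (leadingCoeff_mul' hlc0 ▸ hlc0)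
  rcases eq_or_ne (a - b * q) 0 with h | h
  · rwa [h, natDegree_zero]
  refine natDegree_lt_natDegree h (degree_sub_lt_left ?_ ha0 (by rw [leadingCoeff_mul' hlc0, hlc]))
  rw [degree_eq_natDegree ha0, degree_eq_natDegree hbq0, natDegree_mul' hlc0, hdeg]

namespace Subring

variable {S : Subring ℚ[X]}

theorem hasEuclidChain_of_natDegree_le {k n : ℕ} (hn : n ≠ 0)
    (hsmall : ∀ a b : S, (b : ℚ[X]).natDegree < k → HasEuclidChain a b) (β : ℤ) :
    ∀ (α : ℤ) (a b : S), (a : ℚ[X]).natDegree ≤ k → (b : ℚ[X]).natDegree ≤ k →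
      n * (a : ℚ[X]).coeff k = α → n * (b : ℚ[X]).coeff k = β → HasEuclidChain a b := by
  obtain ⟨m, hm⟩ : ∃ m, β.natAbs = m := ⟨_, rfl⟩
  induction m using Nat.strong_induction_on generalizing β with | _ m ih => ?_
  intro α a b ha hb hα hβ
  rcases eq_or_ne β 0 with rfl | hβ0
  · have hbk : (b : ℚ[X]).coeff k = 0 := by simpa [hn] using hβ
    rcases eq_or_ne b 0 with rfl | hb0
    · exact .zero a
    refine hsmall a b (lt_of_le_of_ne hb fun h => ?_)
    exact leadingCoeff_ne_zero.2 (by simpa using hb0) (h ▸ hbk)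
  -- Subtracting `(α / β) b` turns the scaled `k`-th coefficients `(α, β)` into `(β, α % β)`.
  set z : ℤ := α / β
  refine .step (z : S) (ih _ ?_ (α % β) rfl β b (a - b * z) hb ?_ hβ ?_)
  · subst hm
    have := Int.emod_lt α hβ0
    have := Int.emod_nonneg α hβ0
    omega
  · push_cast
    refine (natDegree_sub_le_of_le ha (natDegree_mul_le.trans ?_)).trans (max_self k).le
    simpa using hb
  · push_cast
    rw [coeff_sub, coeff_mul_intCast, mul_sub, hα, ← mul_assoc, hβ, Int.emod_def]
    push_cast
    ring

theorem hasEuclidChain_of_forall_exists_natDegree_leadingCoeff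
    (hS : ∀ c : ℚ, c ≠ 0 → ∀ k : ℕ, k ≠ 0 → ∃ q ∈ S, q.natDegree = k ∧ q.leadingCoeff = c)
    (a b : S) : HasEuclidChain a b := by
  obtain ⟨k, hk⟩ : ∃ k, (b : ℚ[X]).natDegree = k := ⟨_, rfl⟩
  induction k using Nat.strong_induction_on generalizing a b with | _ k ihb => ?_
  obtain ⟨m, hm⟩ : ∃ m, (a : ℚ[X]).natDegree = m := ⟨_, rfl⟩
  induction m using Nat.strong_induction_on generalizing a with | _ m iha => ?_
  rcases eq_or_ne b 0 with rfl | hb0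
  · exact .zero a
  rcases lt_trichotomy m k with hlt | rfl | hgt
  · exact (ihb m hlt b a hm).symm
  · set x := (a : ℚ[X]).coeff m
    set y := (b : ℚ[X]).coeff m
    refine hasEuclidChain_of_natDegree_le (n := x.den * y.den) (by positivity)
      (fun a' b' h => ihb _ h a' b' rfl) (y.num * x.den) (x.num * y.den) a b hm.le hk.le ?_ ?_
    all_goals
      push_cast
      rw [← Rat.mul_den_eq_num]
      ring
  · have hlcb : (b : ℚ[X]).leadingCoeff ≠ 0 := leadingCoeff_ne_zero.2 (by simpa using hb0)
    have hlca : (a : ℚ[X]).leadingCoeff ≠ 0 :=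
      leadingCoeff_ne_zero.2 (ne_zero_of_natDegree_gt (hm ▸ hgt))
    obtain ⟨q, hqS, hqdeg, hqlc⟩ := hS _ (div_ne_zero hlca hlcb) (m - k) (by omega)
    refine .of_sub_mul ⟨q, hqS⟩ (iha _ ?_ _ rfl)
    rw [← hm]
    exact natDegree_sub_mul_lt (by omega) (by change _ + q.natDegree = _; omega)
      (by change _ * q.leadingCoeff = _; rw [hqlc, mul_div_cancel₀ _ hlcb])

end Subring

/-- `R_τ` is quasi-Euclidean, witnessed by a norm with values in `2 × ℕ⁴` ordered
lexicographically; in particular it is a Bézout domain. -/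
theorem stmt_11 (τ : ∀ p : {p : ℕ // p.Prime}, @PadicInt p.1 ⟨p.2⟩)
    (S : Subring (Polynomial ℚ)) (hS : (S : Set (Polynomial ℚ)) = RtauSet τ) :
    (∃ φ : S × S → Fin 2 ×ₗ (ℕ ×ₗ (ℕ ×ₗ (ℕ ×ₗ ℕ))),
      ∀ a b : S, b ≠ 0 → ∃ q : S, φ (b, a - b * q) < φ (a, b)) ∧
    ∀ I : Ideal S, I.FG → I.IsPrincipal := by
  have hchain : ∀ a b : S, HasEuclidChain a b :=
    Subring.hasEuclidChain_of_forall_exists_natDegree_leadingCoeff fun _ hc _ hk => by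
      simpa only [← SetLike.mem_coe, hS] using exists_mem_rtauSet_natDegree_leadingCoeff τ hc hk
  have := isBezout_of_forall_hasEuclidChain hchain
  obtain ⟨φ, hφ⟩ := exists_nat_norm_of_forall_hasEuclidChain hchain
  refine ⟨⟨fun x => toLex (0, toLex (0, toLex (0, toLex (0, φ x)))), fun a b hb => ?_⟩,
    fun I => IsBezout.isPrincipal_of_FG I⟩
  obtain ⟨q, hq⟩ := hφ a b hb
  exact ⟨q, .right _ <| .right _ <| .right _ <| .right _ hq⟩
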